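/- Let x, y be distinct norm-one elements of the Zorn vector matrix algebra over F₂ such that none of x + 1, y + 1, x + y has norm 1. Then x² = y² = (xy)² = 1 and xy = yx (i.e., x and y generate a subgroup isomorphic to the Klein four-group V₄). -/

import Mathlib

/-- Zorn vector matrices `[[a, α], [β, b]]` over a field `k`. -/
@[ext]
structure Zorn (k : Type*) where
  a : k
  α : Fin 3 → k
  β : Fin 3 → k
  b : k

namespace Zorn

variable {k : Type*} [Field k]

/-- Dot product on `k³`. -/
def dot (u v : Fin 3 → k) : k := u 0 * v 0 + u 1 * v 1 + u 2 * v 2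

/-- Cross product on `k³`. -/
def cross (u v : Fin 3 → k) : Fin 3 → k :=
  ![u 1 * v 2 - u 2 * v 1, u 2 * v 0 - u 0 * v 2, u 0 * v 1 - u 1 * v 0]

/-- Zorn vector matrix multiplication. -/
instance : Mul (Zorn k) :=
  ⟨fun x y =>
    ⟨x.a * y.a + dot x.α y.β,
     fun i => x.a * y.α i + y.b * x.α i - cross x.β y.β i,
     fun i => y.a * x.β i + x.b * y.β i + cross x.α y.α i,
     dot x.β y.α + x.b * y.b⟩⟩

instance : One (Zorn k) := ⟨⟨1, 0, 0, 1⟩⟩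
instance : Zero (Zorn k) := ⟨⟨0, 0, 0, 0⟩⟩
instance : Add (Zorn k) := ⟨fun x y => ⟨x.a + y.a, x.α + y.α, x.β + y.β, x.b + y.b⟩⟩
instance : Neg (Zorn k) := ⟨fun x => ⟨-x.a, -x.α, -x.β, -x.b⟩⟩
instance : SMul k (Zorn k) := ⟨fun c x => ⟨c * x.a, c • x.α, c • x.β, c * x.b⟩⟩

/-- The norm (determinant) of a Zorn vector matrix. -/
def N (x : Zorn k) : k := x.a * x.b - dot x.α x.β

/-- The bilinear form associated with the norm. -/
def polarN (x y : Zorn k) : k := N (x + y) - N x - N y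

/-!
Every element satisfies the Cayley–Hamilton identity `z * z + N z • 1 = trace z • z`, and
`N (z + 1) = N z + trace z + 1`. Over `F₂` the hypotheses therefore say `trace x = trace y = 0`
and `N (x + y) = 0`, whence `x * x = y * y = 1` and `(x + y) * (x + y) = 0`; expanding the last
square gives `x * y = y * x`. Finally `N (x * y) = 1` by multiplicativity of the norm
(Binet–Cauchy for the cross product), and `trace (x * y) = trace x * trace y - polarN x y = 0`,
so `(x * y) * (x * y) = 1`.
-/

open Matrix

theorem dot_eq_dotProduct (u v : Fin 3 → k) : dot u v = u ⬝ᵥ v := by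
  simp [dot, dotProduct, Fin.sum_univ_three]

@[simp] lemma add_a (x y : Zorn k) : (x + y).a = x.a + y.a := rfl
@[simp] lemma add_α (x y : Zorn k) : (x + y).α = x.α + y.α := rfl
@[simp] lemma add_β (x y : Zorn k) : (x + y).β = x.β + y.β := rfl
@[simp] lemma add_b (x y : Zorn k) : (x + y).b = x.b + y.b := rfl
@[simp] lemma zero_a : (0 : Zorn k).a = 0 := rfl
@[simp] lemma zero_α : (0 : Zorn k).α = 0 := rfl
@[simp] lemma zero_β : (0 : Zorn k).β = 0 := rfl
@[simp] lemma zero_b : (0 : Zorn k).b = 0 := rfl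
@[simp] lemma one_a : (1 : Zorn k).a = 1 := rfl
@[simp] lemma one_α : (1 : Zorn k).α = 0 := rfl
@[simp] lemma one_β : (1 : Zorn k).β = 0 := rfl
@[simp] lemma one_b : (1 : Zorn k).b = 1 := rfl
@[simp] lemma smul_a (c : k) (x : Zorn k) : (c • x).a = c * x.a := rfl
@[simp] lemma smul_α (c : k) (x : Zorn k) : (c • x).α = c • x.α := rfl
@[simp] lemma smul_β (c : k) (x : Zorn k) : (c • x).β = c • x.β := rfl
@[simp] lemma smul_b (c : k) (x : Zorn k) : (c • x).b = c * x.b := rfl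
@[simp] lemma mul_a (x y : Zorn k) : (x * y).a = x.a * y.a + x.α ⬝ᵥ y.β := by
  rw [← dot_eq_dotProduct]; rfl
@[simp] lemma mul_α (x y : Zorn k) : (x * y).α = x.a • y.α + y.b • x.α - x.β ⨯₃ y.β := rfl
@[simp] lemma mul_β (x y : Zorn k) : (x * y).β = y.a • x.β + x.b • y.β + x.α ⨯₃ y.α := rfl
@[simp] lemma mul_b (x y : Zorn k) : (x * y).b = x.β ⬝ᵥ y.α + x.b * y.b := by
  rw [← dot_eq_dotProduct]; rfl

theorem N_eq_sub_dotProduct (x : Zorn k) : N x = x.a * x.b - x.α ⬝ᵥ x.β := by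
  rw [← dot_eq_dotProduct]; rfl

-- Zorn's algebra is alternative but not associative.
instance : NonUnitalNonAssocRing (Zorn k) where
  add := (· + ·)
  zero := 0
  neg := Neg.neg
  mul := (· * ·)
  add_assoc x y z := by ext1 <;> exact add_assoc _ _ _
  zero_add x := by ext1 <;> exact zero_add _
  add_zero x := by ext1 <;> exact add_zero _
  add_comm x y := by ext1 <;> exact add_comm _ _
  neg_add_cancel x := by ext1 <;> exact neg_add_cancel _
  nsmul := nsmulRec
  zsmul := zsmulRec
  left_distrib x y z := by
    ext1 <;> simp only [mul_a, mul_α, mul_β, mul_b, add_a, add_α, add_β, add_b, dotProduct_add,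
      map_add, mul_add, smul_add, add_smul] <;> abel
  right_distrib x y z := by
    ext1 <;> simp only [mul_a, mul_α, mul_β, mul_b, add_a, add_α, add_β, add_b, add_dotProduct,
      map_add, LinearMap.add_apply, add_mul, smul_add, add_smul] <;> abel
  zero_mul x := by ext1 <;> simp
  mul_zero x := by ext1 <;> simp

instance : Module k (Zorn k) where
  one_smul x := by ext1 <;> simp
  mul_smul c d x := by ext1 <;> simp [mul_assoc, mul_smul]
  smul_zero c := by ext1 <;> simp
  smul_add c x y := by ext1 <;> simp [mul_add]
  add_smul c d x := by ext1 <;> simp [add_mul, add_smul]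
  zero_smul x := by ext1 <;> simp

def trace (z : Zorn k) : k := z.a + z.b

theorem mul_self_add_N_smul_one (z : Zorn k) : z * z + N z • 1 = trace z • z := by
  ext1
  · simp only [N_eq_sub_dotProduct, trace, mul_a, add_a, smul_a, one_a]
    ring
  · simp only [trace, mul_α, add_α, smul_α, one_α, cross_self, smul_zero]
    module
  · simp only [trace, mul_β, add_β, smul_β, one_β, cross_self, smul_zero]
    module
  · simp only [N_eq_sub_dotProduct, trace, mul_b, add_b, smul_b, one_b,
      dotProduct_comm z.β z.α]
    ring

theorem N_mul (x y : Zorn k) : N (x * y) = N x * N y := by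
  simp only [N_eq_sub_dotProduct, mul_a, mul_α, mul_β, mul_b, dotProduct_add, add_dotProduct,
    sub_dotProduct, smul_dotProduct, dotProduct_smul, dot_self_cross, dot_cross_self, smul_eq_mul]
  rw [dotProduct_comm (x.β ⨯₃ y.β) x.β, dot_self_cross, dotProduct_comm (x.β ⨯₃ y.β) y.β,
    dot_cross_self, cross_dot_cross, dotProduct_comm x.β x.α, dotProduct_comm y.β y.α,
    dotProduct_comm y.β x.α, dotProduct_comm x.β y.α]
  ring

theorem trace_add (x y : Zorn k) : trace (x + y) = trace x + trace y := by
  simp only [trace, add_a, add_b]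
  ring

theorem trace_mul (x y : Zorn k) : trace (x * y) = trace x * trace y - polarN x y := by
  simp only [trace, polarN, N_eq_sub_dotProduct, mul_a, mul_b, add_a, add_α, add_β, add_b,
    dotProduct_add, add_dotProduct, dotProduct_comm x.β y.α]
  ring

theorem N_add_one (z : Zorn k) : N (z + 1) = N z + trace z + 1 := by
  simp only [N_eq_sub_dotProduct, trace, add_a, add_α, add_β, add_b, one_a, one_α, one_β, one_b,
    add_zero]
  ring

section CharTwo

variable [CharP k 2]

theorem add_self_eq_zero (z : Zorn k) : z + z = 0 := by
  rw [← two_smul k, CharTwo.two_eq_zero, zero_smul]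

theorem mul_self_eq_N_smul_one {z : Zorn k} (hz : trace z = 0) : z * z = N z • 1 := by
  have h := mul_self_add_N_smul_one z
  rwa [hz, zero_smul, add_eq_zero_iff_eq_neg, ← neg_smul, CharTwo.neg_eq] at h

theorem N_add_one_of_N_eq_one {z : Zorn k} (hz : N z = 1) : N (z + 1) = trace z := by
  rw [N_add_one, hz, add_comm 1, add_assoc, CharTwo.add_self_eq_zero, add_zero]

theorem mul_comm_of_add_mul_self_eq_zero {x y : Zorn k} (hx : x * x = 1) (hy : y * y = 1)
    (h : (x + y) * (x + y) = 0) : x * y = y * x :=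
  calc x * y = x * y + (y * x + y * x) + (1 + 1) := by simp only [add_self_eq_zero, add_zero]
    _ = (x + y) * (x + y) + y * x := by rw [add_mul, mul_add, mul_add, hx, hy]; abel
    _ = y * x := by rw [h, zero_add]

end CharTwo

theorem klein_four_general (x y : Zorn (ZMod 2)) (hx : N x = 1) (hy : N y = 1)
    (hx1 : N (x + 1) ≠ 1) (hy1 : N (y + 1) ≠ 1) (hxy : N (x + y) ≠ 1) :
    x * x = 1 ∧ y * y = 1 ∧ (x * y) * (x * y) = 1 ∧ x * y = y * x := by
  have eq_zero_of_ne_one : ∀ t : ZMod 2, t ≠ 1 → t = 0 := by decide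
  have htx : trace x = 0 := by rw [← N_add_one_of_N_eq_one hx]; exact eq_zero_of_ne_one _ hx1
  have hty : trace y = 0 := by rw [← N_add_one_of_N_eq_one hy]; exact eq_zero_of_ne_one _ hy1
  have hNxy : N (x + y) = 0 := eq_zero_of_ne_one _ hxy
  have hxx : x * x = 1 := by rw [mul_self_eq_N_smul_one htx, hx, one_smul]
  have hyy : y * y = 1 := by rw [mul_self_eq_N_smul_one hty, hy, one_smul]
  have hsum : (x + y) * (x + y) = 0 := by
    rw [mul_self_eq_N_smul_one (by rw [trace_add, htx, hty, add_zero]), hNxy, zero_smul]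
  have htr : trace (x * y) = 0 := by rw [trace_mul, htx, hty, polarN, hNxy, hx, hy]; decide
  have hxyxy : (x * y) * (x * y) = 1 := by
    rw [mul_self_eq_N_smul_one htr, N_mul, hx, hy, one_mul, one_smul]
  exact ⟨hxx, hyy, hxyxy, mul_comm_of_add_mul_self_eq_zero hxx hyy hsum⟩

/-- If `x ≠ y` are norm-one elements of the Zorn algebra over `F₂` such that none of
`x + 1`, `y + 1`, `x + y` has norm one, then `x` and `y` generate a Klein four-group. -/
theorem klein_four (x y : Zorn (ZMod 2)) (hx : N x = 1) (hy : N y = 1) (hne : x ≠ y)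
    (hx1 : N (x + 1) ≠ 1) (hy1 : N (y + 1) ≠ 1) (hxy : N (x + y) ≠ 1) :
    x * x = 1 ∧ y * y = 1 ∧ (x * y) * (x * y) = 1 ∧ x * y = y * x :=
  klein_four_general x y hx hy hx1 hy1 hxy

end Zorn
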